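/- arXiv:2512.14817 — 6 statements merged into one kernel-verified Lean document; each statement's English description precedes it below -/
import Mathlib

section
/- Two lattice points on the boundary of a reflexive polytope either lie on a common proper face of the polytope, or their sum is again a lattice point of the polytope. -/
/-!
A facet normal `m` pairs with a lattice point `u` to an integer, so for a lattice point of the
polytope this pairing is either `-1` or at least `0`. Boundary lattice points lie in the (closed)
polytope; if no facet is tight on both `u₁` and `u₂`, then for each `m` one of the two pairings
is `≥ 0` and the other `≥ -1`, hence `⟨m, u₁ + u₂⟩ ≥ -1`.
-/

/-- Cast an integer vector to a real vector. -/
def toR {n : ℕ} (w : Fin n → ℤ) : Fin n → ℝ := fun i => (w i : ℝ)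

lemma isClosed_setOf_forall_neg_one_le_sum {n : ℕ} (M : Finset (Fin n → ℤ)) :
    IsClosed {x : Fin n → ℝ | ∀ m ∈ M, (-1 : ℝ) ≤ ∑ i, (m i : ℝ) * x i} := by
  simp only [Set.ofPred_forall]
  exact isClosed_biInter fun m _ => isClosed_le continuous_const (by fun_prop)

lemma sum_intCast_mul_intCast {n : ℕ} (m u : Fin n → ℤ) :
    ∑ i, (m i : ℝ) * (u i : ℝ) = ((∑ i, m i * u i : ℤ) : ℝ) := by
  push_cast
  rfl

theorem stmt_0_general {n : ℕ} (M : Finset (Fin n → ℤ)) (P : Set (Fin n → ℝ))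
    (hP : P = {x | ∀ m ∈ M, (-1 : ℝ) ≤ ∑ i, (m i : ℝ) * x i})
    (u₁ u₂ : Fin n → ℤ)
    (hu₁bd : toR u₁ ∈ frontier P) (hu₂bd : toR u₂ ∈ frontier P) :
    (∃ m ∈ M, (∑ i, (m i : ℝ) * (u₁ i : ℝ)) = -1 ∧ (∑ i, (m i : ℝ) * (u₂ i : ℝ)) = -1)
      ∨ toR (u₁ + u₂) ∈ P := by
  have hclosed : IsClosed P := hP ▸ isClosed_setOf_forall_neg_one_le_sum M
  have h₁ := hclosed.frontier_subset hu₁bd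
  have h₂ := hclosed.frontier_subset hu₂bd
  rw [or_iff_not_imp_left]
  push Not
  intro hnot_tight
  subst hP
  intro m hm
  have hm₁ := h₁ m hm
  have hm₂ := h₂ m hm
  have hm₁₂ := hnot_tight m hm
  simp only [toR, Pi.add_apply, Int.cast_add, mul_add, Finset.sum_add_distrib,
    sum_intCast_mul_intCast] at hm₁ hm₂ hm₁₂ ⊢
  norm_cast at hm₁ hm₂ hm₁₂ ⊢
  omega

/-- Two lattice points on the boundary of a reflexive polytope either
lie on a common proper face of the polytope (equivalently, a common facet, i.e. some
integral facet normal `m` is tight on both), or their sum is again a lattice point of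
the polytope.  The reflexive polytope `P` is encoded by its finite set `M` of integral
facet normals, each facet lying on the hyperplane `⟨m, x⟩ = -1`; `P` is bounded and
contains the origin in its interior. -/
theorem stmt_0 {n : ℕ} (M : Finset (Fin n → ℤ)) (P : Set (Fin n → ℝ))
    (hP : P = {x | ∀ m ∈ M, (-1 : ℝ) ≤ ∑ i, (m i : ℝ) * x i})
    (hbdd : Bornology.IsBounded P)
    (h0 : (0 : Fin n → ℝ) ∈ interior P)
    (u₁ u₂ : Fin n → ℤ)
    (hu₁bd : toR u₁ ∈ frontier P) (hu₂bd : toR u₂ ∈ frontier P) :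
    (∃ m ∈ M, (∑ i, (m i : ℝ) * (u₁ i : ℝ)) = -1 ∧ (∑ i, (m i : ℝ) * (u₂ i : ℝ)) = -1)
      ∨ toR (u₁ + u₂) ∈ P :=
  stmt_0_general M P hP u₁ u₂ hu₁bd hu₂bd
end

section
/- Let Δ° ⊂ ℝⁿ be an n-dimensional lattice polytope with 0 in its interior, and let u₁, ..., uₙ be linearly independent boundary lattice points of Δ° such that every (n-1)-element subset of {u₁,...,uₙ} lies on a common facet of Δ°, but all n of them do not. Let m ∈ (ℝⁿ)* be the linear functional with ⟨m, uᵢ⟩ = -1 for all i. Then every lattice point p of Δ° with ⟨m, p⟩ < -1 lies in the cone spanned by u₁, ..., uₙ. -/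
/-!
Write `p = ∑ aᵢ uᵢ` in the basis `u`. Then `⟨m, p⟩ = -∑ aᵢ`, so `∑ aᵢ > 1`, while
`-1 ≤ ⟨mⱼ, p⟩ = aⱼ (⟨mⱼ, uⱼ⟩ + 1) - ∑ aᵢ` with `⟨mⱼ, uⱼ⟩ + 1 > 0` forces `aⱼ > 0`.
-/

open Finset

section FacetCoefficients

variable {𝕜 M ι : Type*} [Field 𝕜] [LinearOrder 𝕜] [IsStrictOrderedRing 𝕜]
  [AddCommGroup M] [Module 𝕜 M] [Fintype ι] {v : ι → M} {a : ι → 𝕜}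

theorem one_lt_sum_of_apply_sum_smul_lt_neg_one {m : Module.Dual 𝕜 M}
    (hm : ∀ i, m (v i) = -1) (h : m (∑ i, a i • v i) < -1) : 1 < ∑ i, a i := by
  simp only [map_sum, map_smul, hm, smul_eq_mul, mul_neg_one, sum_neg_distrib] at h
  linarith

theorem pos_of_neg_one_le_apply_sum_smul [DecidableEq ι] {f : Module.Dual 𝕜 M} {j : ι}
    (hf : ∀ i, i ≠ j → f (v i) = -1) (hfj : -1 < f (v j)) (hsum : 1 < ∑ i, a i)
    (h : -1 ≤ f (∑ i, a i • v i)) : 0 < a j := by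
  have hexpand : f (∑ i, a i • v i) = a j * (f (v j) + 1) - ∑ i, a i := by
    rw [map_sum, ← add_sum_erase _ _ (mem_univ j), ← add_sum_erase _ _ (mem_univ j),
      sum_congr rfl fun i hi => by rw [map_smul, hf i (ne_of_mem_erase hi)]]
    simp only [map_smul, smul_eq_mul, mul_neg_one, sum_neg_distrib]
    ring
  have hprod : 0 < a j * (f (v j) + 1) := by linarith
  exact pos_of_mul_pos_left hprod (by linarith)

end FacetCoefficients

theorem stmt_10_general {n : ℕ} (P : Set (Fin n → ℝ))
    (u : Fin n → (Fin n → ℤ))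
    (hu_indep : LinearIndependent ℝ (fun i => toR (u i)))
    (m : Fin n → ℝ) (hm : ∀ i, ∑ k, m k * (u i k : ℝ) = -1)
    (mf : Fin n → (Fin n → ℝ))
    (hmf_supp : ∀ j, ∀ x ∈ P, (-1 : ℝ) ≤ ∑ k, mf j k * x k)
    (hmf_eq : ∀ j i, i ≠ j → ∑ k, mf j k * (u i k : ℝ) = -1)
    (hmf_ne : ∀ j, (-1 : ℝ) < ∑ k, mf j k * (u j k : ℝ))
    (p : Fin n → ℤ) (hp : toR p ∈ P) (hmp : ∑ k, m k * (p k : ℝ) < -1) :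
    ∃ a : Fin n → ℝ, (∀ i, 0 ≤ a i) ∧ toR p = ∑ i, a i • toR (u i) := by
  let dual (w : Fin n → ℝ) : Module.Dual ℝ (Fin n → ℝ) := dotProductBilin ℝ ℝ w
  have hspan := hu_indep.span_eq_top_of_card_eq_finrank' (by simp)
  obtain ⟨a, hpa⟩ : ∃ a : Fin n → ℝ, ∑ i, a i • toR (u i) = toR p :=
    (Submodule.mem_span_range_iff_exists_fun ℝ).1 (hspan ▸ Submodule.mem_top)
  have hsum : 1 < ∑ i, a i := by
    refine one_lt_sum_of_apply_sum_smul_lt_neg_one (m := dual m) (v := fun i => toR (u i)) hm ?_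
    rwa [hpa]
  refine ⟨a, fun j => le_of_lt ?_, hpa.symm⟩
  refine pos_of_neg_one_le_apply_sum_smul (f := dual (mf j)) (v := fun i => toR (u i))
    (hmf_eq j) (hmf_ne j) hsum ?_
  rw [hpa]
  exact hmf_supp j _ hp

/-- Let `Δ° = P ⊂ ℝⁿ` be an `n`-dimensional lattice polytope
(convex, bounded) with `0` in its interior, and let `u₁, …, uₙ` be linearly
independent boundary lattice points such that, for each `j`, the points
`{uᵢ : i ≠ j}` lie on a common facet `Θⱼ` (with supporting functional `mf j`
satisfying `⟨mf j, x⟩ ≥ -1` on `P`, equality on `{uᵢ : i ≠ j}`, and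
`⟨mf j, uⱼ⟩ > -1`, witnessing that all `n` points lie on no common facet).  Let `m`
be the linear functional with `⟨m, uᵢ⟩ = -1` for all `i`.  Then every lattice point
`p` of `Δ°` with `⟨m, p⟩ < -1` lies in the cone spanned by `u₁, …, uₙ`. -/
theorem stmt_10 {n : ℕ} (P : Set (Fin n → ℝ))
    (hconv : Convex ℝ P) (hbdd : Bornology.IsBounded P)
    (h0 : (0 : Fin n → ℝ) ∈ interior P)
    (u : Fin n → (Fin n → ℤ))
    (hu_indep : LinearIndependent ℝ (fun i => toR (u i)))
    (huP : ∀ i, toR (u i) ∈ frontier P)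
    (m : Fin n → ℝ) (hm : ∀ i, ∑ k, m k * (u i k : ℝ) = -1)
    (mf : Fin n → (Fin n → ℝ))
    (hmf_supp : ∀ j, ∀ x ∈ P, (-1 : ℝ) ≤ ∑ k, mf j k * x k)
    (hmf_eq : ∀ j i, i ≠ j → ∑ k, mf j k * (u i k : ℝ) = -1)
    (hmf_ne : ∀ j, (-1 : ℝ) < ∑ k, mf j k * (u j k : ℝ))
    (p : Fin n → ℤ) (hp : toR p ∈ P) (hmp : ∑ k, m k * (p k : ℝ) < -1) :
    ∃ a : Fin n → ℝ, (∀ i, 0 ≤ a i) ∧ toR p = ∑ i, a i • toR (u i) :=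
  stmt_10_general P u hu_indep m hm mf hmf_supp hmf_eq hmf_ne p hp hmp
end

section
/- A fine simplicial fan in ℝⁿ whose rays are generated by exactly the boundary lattice points of an n-dimensional lattice polytope Δ° (with 0 in its interior) and whose support is the cone over Δ° cannot have a maximal (n-dimensional) cone σ that is a 'basepoint cone', i.e., such that the generators of σ are not contained in a common facet of Δ° while the generators of every proper face of σ are contained in some facet of Δ°. -/
/-!
Let `σ` be spanned by the basis `u₁, …, uₙ` and let `f` be the sum of the coordinates in this
basis, so `f = 1` on every `uᵢ`. Since the `uᵢ` lie on no common facet, `f` exceeds `1`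
somewhere on `Δ°`, so its maximum is attained at a lattice point `v` with `f v > 1`, and `v` lies
on the boundary of `Δ°`. For each `j`, the facet through the `uᵢ` with `i ≠ j`, evaluated at `v`,
forces the `j`-th coordinate of `v` to be positive; so `v` lies in the interior of `σ`. By
fineness the ray through `v` is a cone of the fan sharing a relative interior point with `σ`,
hence equals `σ`. But then some `uᵢ` is `c • v` with `c = 1 / f v < 1`, an interior point of
`Δ°`, although it is a boundary point.
-/

open Set

/-- A set `s` of points is contained in a common facet of the polytope `P` (which has
the origin in its interior) when some supporting functional at level `-1` is tight on
all of `s`. -/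
def OnCommonFacet {n : ℕ} (P : Set (Fin n → ℝ)) (s : Set (Fin n → ℝ)) : Prop :=
  ∃ m : Fin n → ℝ, (∀ x ∈ P, (-1 : ℝ) ≤ ∑ k, m k * x k) ∧ ∀ u ∈ s, ∑ k, m k * u k = -1

theorem onCommonFacet_iff {n : ℕ} {P s : Set (Fin n → ℝ)} :
    OnCommonFacet P s ↔
      ∃ g : Module.Dual ℝ (Fin n → ℝ), (∀ x ∈ P, -1 ≤ g x) ∧ ∀ x ∈ s, g x = -1 := by
  constructor
  · rintro ⟨m, hP, hs⟩
    exact ⟨dotProductBilin ℝ ℝ m, hP, hs⟩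
  · rintro ⟨g, hP, hs⟩
    have hg : ∀ x, g x = ∑ k, g (Pi.single k 1) * x k := fun x => by
      conv_lhs => rw [pi_eq_sum_univ' x]
      simp only [map_sum, map_smul, smul_eq_mul, mul_comm (x _)]
    exact ⟨fun k => g (Pi.single k 1), fun x hx => hg x ▸ hP x hx, fun x hx => hg x ▸ hs x hx⟩

theorem LinearMap.exists_mem_isMaxOn_convexHull {E : Type*} [AddCommGroup E] [Module ℝ E]
    (f : E →ₗ[ℝ] ℝ) {s : Set E} (hs : s.Finite) (hne : s.Nonempty) :
    ∃ x ∈ s, IsMaxOn f (convexHull ℝ s) x := by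
  obtain ⟨x, hxs, hmax⟩ := s.exists_max_image f hs hne
  exact ⟨x, hxs, convexHull_min hmax (convex_halfSpace_le f.isLinear (f x))⟩

section Topology

variable {E : Type*} [AddCommGroup E] [Module ℝ E] [TopologicalSpace E]

theorem IsMaxOn.notMem_interior_of_pos [ContinuousSMul ℝ E] {f : E →ₗ[ℝ] ℝ} {P : Set E}
    {x : E} (hmax : IsMaxOn f P x) (hpos : 0 < f x) : x ∉ interior P := by
  intro hx
  have hcont : Filter.Tendsto (fun t : ℝ => t • x) (nhdsWithin 1 (Ioi 1)) (nhds x) := by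
    have : Continuous fun t : ℝ => t • x := by fun_prop
    simpa using (this.tendsto 1).mono_left nhdsWithin_le_nhds
  obtain ⟨t, htP, ht1⟩ :=
    ((hcont.eventually (isOpen_interior.mem_nhds hx)).and self_mem_nhdsWithin).exists
  have : f (t • x) ≤ f x := hmax (interior_subset htP)
  rw [map_smul, smul_eq_mul] at this
  nlinarith [show (1 : ℝ) < t from ht1]

theorem Convex.smul_mem_interior_of_zero_mem_interior [IsTopologicalAddGroup E]
    [ContinuousSMul ℝ E] {P : Set E} (hP : Convex ℝ P)
    (h0 : (0 : E) ∈ interior P) {x : E} (hx : x ∈ closure P) {c : ℝ} (hc0 : 0 ≤ c)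
    (hc1 : c < 1) : c • x ∈ interior P := by
  have := hP.add_smul_sub_mem_interior' hx h0 (t := 1 - c) ⟨by linarith, by linarith⟩
  convert this using 1
  module

end Topology

theorem mem_intrinsicInterior_ray {E : Type*} [NormedAddCommGroup E] [NormedSpace ℝ E]
    {v : E} (hv : v ≠ 0) : v ∈ intrinsicInterior ℝ {x | ∃ c : ℝ, 0 ≤ c ∧ x = c • v} := by
  have hnorm : ‖v‖ ≠ 0 := norm_ne_zero_iff.mpr hv
  let φ := (LinearIsometry.toSpanSingleton ℝ E (norm_smul_inv_norm (𝕜 := ℝ) hv)).toAffineIsometry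
  have hφ : ∀ t : ℝ, φ t = (t * ‖v‖⁻¹) • v := fun t => by
    simp [φ, LinearIsometry.toSpanSingleton_apply, smul_smul]
  have hray : {x | ∃ c : ℝ, 0 ≤ c ∧ x = c • v} = φ '' Ici 0 := by
    ext x
    constructor
    · rintro ⟨c, hc, rfl⟩
      exact ⟨c * ‖v‖, mul_nonneg hc (norm_nonneg v), by rw [hφ, mul_inv_cancel_right₀ hnorm]⟩
    · rintro ⟨t, ht, rfl⟩
      exact ⟨t * ‖v‖⁻¹, mul_nonneg ht (by positivity), hφ t⟩
  rw [hray, AffineIsometry.intrinsicInterior_image]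
  refine ⟨‖v‖, interior_subset_intrinsicInterior ?_, ?_⟩
  · simpa [interior_Ici] using hv
  · rw [hφ, mul_inv_cancel₀ hnorm, one_smul]

theorem Module.Basis.mem_interior_cone_of_repr_pos {ι E : Type*} [Fintype ι]
    [NormedAddCommGroup E] [NormedSpace ℝ E] [FiniteDimensional ℝ E] (B : Basis ι ℝ E) {x : E}
    (hx : ∀ i, 0 < B.repr x i) :
    x ∈ interior {y | ∃ a : ι → ℝ, (∀ i, 0 ≤ a i) ∧ y = ∑ i, a i • B i} := by
  have hopen : IsOpen (⋂ i, {y | 0 < B.coord i y}) := isOpen_iInter_of_finite fun i =>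
    isOpen_lt continuous_const (B.coord i).continuous_of_finiteDimensional
  refine interior_maximal ?_ hopen (mem_iInter.mpr hx)
  intro y hy
  exact ⟨fun i => B.repr y i, fun i => (mem_iInter.mp hy i).le, (B.sum_repr y).symm⟩

namespace Module.Basis

variable {ι E : Type*} [AddCommGroup E] [Module ℝ E] {B : Basis ι ℝ E} {P : Set E}

theorem one_lt_sumCoords_of_isMaxOn
    (hcommon : ¬∃ g : Module.Dual ℝ E, (∀ x ∈ P, -1 ≤ g x) ∧ ∀ i, g (B i) = -1) {x : E}
    (hmax : IsMaxOn B.sumCoords P x) : 1 < B.sumCoords x := by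
  by_contra! h
  refine hcommon ⟨-B.sumCoords, fun y hy => ?_, fun i => by simp⟩
  simpa using (hmax hy).trans h

theorem mem_interior_of_eq_smul [TopologicalSpace E] [IsTopologicalAddGroup E]
    [ContinuousSMul ℝ E] (hP : Convex ℝ P) (h0 : (0 : E) ∈ interior P) {x : E}
    (hx : x ∈ closure P) (hsum : 1 < B.sumCoords x) {i : ι} {c : ℝ} (hc0 : 0 ≤ c)
    (hc : B i = c • x) : B i ∈ interior P := by
  have hc1 : c < 1 := by
    have := congrArg B.sumCoords hc
    rw [sumCoords_self_apply, map_smul, smul_eq_mul] at this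
    nlinarith
  exact hc ▸ hP.smul_mem_interior_of_zero_mem_interior h0 hx hc0 hc1

variable [Fintype ι]

theorem sumCoords_apply_of_fintype (B : Basis ι ℝ E) (x : E) :
    B.sumCoords x = ∑ i, B.repr x i := by
  simp [sumCoords, Finsupp.sum_fintype]

theorem repr_pos_of_tight_except {g : Module.Dual ℝ E} {j : ι}
    (hg : ∀ i ≠ j, g (B i) = -1) (hgj : -1 < g (B j)) {x : E} (hx : -1 ≤ g x)
    (hsum : 1 < B.sumCoords x) : 0 < B.repr x j := by
  rw [sumCoords_apply_of_fintype] at hsum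
  have hgx : g x = B.repr x j * (g (B j) + 1) - ∑ i, B.repr x i := by
    calc g x = ∑ i, B.repr x i * (g (B i) + 1) - ∑ i, B.repr x i := by
          conv_lhs => rw [← B.sum_repr x]
          simp only [map_sum, map_smul, smul_eq_mul, mul_add, mul_one, Finset.sum_add_distrib,
            add_sub_cancel_right]
      _ = _ := by
          rw [Finset.sum_eq_single j (fun i _ hij => by simp [hg i hij]) (by simp)]
  have : 0 < B.repr x j * (g (B j) + 1) := by linarith
  exact pos_of_mul_pos_left this (by linarith)

theorem repr_pos_of_one_lt_sumCoords
    (hcommon : ¬∃ g : Module.Dual ℝ E, (∀ x ∈ P, -1 ≤ g x) ∧ ∀ i, g (B i) = -1)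
    (hfacet : ∀ j, ∃ g : Module.Dual ℝ E, (∀ x ∈ P, -1 ≤ g x) ∧ ∀ i ≠ j, g (B i) = -1)
    (hBP : ∀ i, B i ∈ P) {x : E} (hx : x ∈ P) (hsum : 1 < B.sumCoords x) (j : ι) :
    0 < B.repr x j := by
  obtain ⟨g, hgP, hg⟩ := hfacet j
  refine repr_pos_of_tight_except hg ((hgP _ (hBP j)).lt_of_ne fun hgj => ?_) (hgP x hx) hsum
  refine hcommon ⟨g, hgP, fun i => ?_⟩
  rcases eq_or_ne i j with rfl | hij
  exacts [hgj.symm, hg i hij]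

end Module.Basis

theorem stmt_11_general {n : ℕ} (V : Finset (Fin n → ℤ)) (P : Set (Fin n → ℝ))
    (hP : P = convexHull ℝ (toR '' ↑V))
    (h0 : (0 : Fin n → ℝ) ∈ interior P)
    (F : Set (Set (Fin n → ℝ)))
    (hfan : ∀ σ ∈ F, ∀ τ ∈ F, σ ≠ τ →
      intrinsicInterior ℝ σ ∩ intrinsicInterior ℝ τ = ∅)
    (hfine : ∀ w : Fin n → ℤ, toR w ∈ frontier P →
      {x | ∃ c : ℝ, 0 ≤ c ∧ x = c • toR w} ∈ F)
    (u : Fin n → (Fin n → ℤ))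
    (hindep : LinearIndependent ℝ (fun i => toR (u i)))
    (hubd : ∀ i, toR (u i) ∈ frontier P)
    (hσ : {x | ∃ a : Fin n → ℝ, (∀ i, 0 ≤ a i) ∧ x = ∑ i, a i • toR (u i)} ∈ F)
    (hbp1 : ¬ OnCommonFacet P (Set.range fun i => toR (u i)))
    (hbp2 : ∀ j : Fin n, OnCommonFacet P {x | ∃ i, i ≠ j ∧ x = toR (u i)}) :
    False := by
  have hPclosed : IsClosed P :=
    hP ▸ ((V.finite_toSet.image toR).isCompact_convexHull (𝕜 := ℝ)).isClosed
  let B := basisOfLinearIndependentOfCardEqFinrank' _ hindep (by simp)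
  have hB : ∀ i, toR (u i) = B i := by simp [B]
  simp only [hB] at hubd hσ
  have hcommon : ¬∃ g : Module.Dual ℝ _, (∀ x ∈ P, -1 ≤ g x) ∧ ∀ i, g (B i) = -1 := by
    simpa [onCommonFacet_iff, hB] using hbp1
  have hfacet : ∀ j, ∃ g : Module.Dual ℝ _, (∀ x ∈ P, -1 ≤ g x) ∧ ∀ i ≠ j, g (B i) = -1 :=
    fun j => (onCommonFacet_iff.mp (hbp2 j)).imp fun g hg =>
      ⟨hg.1, fun i hij => hg.2 _ ⟨i, hij, (hB i).symm⟩⟩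
  have hS : (toR '' (V : Set (Fin n → ℤ))).Nonempty :=
    convexHull_nonempty_iff.mp ⟨0, hP ▸ interior_subset h0⟩
  obtain ⟨_, hwV, hmax⟩ :=
    B.sumCoords.exists_mem_isMaxOn_convexHull (V.finite_toSet.image toR) hS
  have hwP := subset_convexHull ℝ _ hwV
  rw [← hP] at hmax hwP
  obtain ⟨w, -, rfl⟩ := hwV
  have hsum := Module.Basis.one_lt_sumCoords_of_isMaxOn hcommon hmax
  have hwσ := interior_subset_intrinsicInterior (𝕜 := ℝ) (B.mem_interior_cone_of_repr_pos
    (Module.Basis.repr_pos_of_one_lt_sumCoords hcommon hfacet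
      (fun i => hPclosed.frontier_subset (hubd i)) hwP hsum))
  have hwfr : toR w ∈ frontier P :=
    hPclosed.frontier_eq ▸ ⟨hwP, hmax.notMem_interior_of_pos (by linarith)⟩
  have hw0 : toR w ≠ 0 := fun h => by norm_num [h] at hsum
  have hσR : {y | ∃ a : Fin n → ℝ, (∀ i, 0 ≤ a i) ∧ y = ∑ i, a i • B i} =
      {x | ∃ c : ℝ, 0 ≤ c ∧ x = c • toR w} := by
    by_contra hne
    exact (hfan _ hσ _ (hfine w hwfr) hne).subset ⟨hwσ, mem_intrinsicInterior_ray hw0⟩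
  obtain ⟨i, -⟩ := Function.ne_iff.mp hw0
  obtain ⟨c, hc0, hc⟩ : B i ∈ {x | ∃ c : ℝ, 0 ≤ c ∧ x = c • toR w} := by
    refine hσR ▸ ⟨Pi.single i 1, fun j => ?_, by simp [Pi.single_apply]⟩
    exact (Pi.single_nonneg.mpr zero_le_one : (0 : Fin n → ℝ) ≤ Pi.single i 1) j
  exact (hubd i).2 (Module.Basis.mem_interior_of_eq_smul (hP ▸ convex_convexHull ℝ _) h0
    (subset_closure hwP) hsum hc0 hc)

/-- A fine simplicial fan `F` in `ℝⁿ` — a collection of cones with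
pairwise disjoint relative interiors, whose rays are generated by exactly the boundary
lattice points of an `n`-dimensional lattice polytope `Δ° = P` (with `0` in its
interior), and whose support is the cone over `Δ°` — cannot have a maximal
(`n`-dimensional) cone `σ` that is a *basepoint cone*: one whose generators
`u₁, …, uₙ` are not contained in a common facet of `Δ°` while the generators of every
proper face of `σ` are contained in some facet of `Δ°`. -/
theorem stmt_11 {n : ℕ} (V : Finset (Fin n → ℤ)) (P : Set (Fin n → ℝ))
    (hP : P = convexHull ℝ (toR '' ↑V))
    (h0 : (0 : Fin n → ℝ) ∈ interior P)
    (F : Set (Set (Fin n → ℝ)))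
    (hfan : ∀ σ ∈ F, ∀ τ ∈ F, σ ≠ τ →
      intrinsicInterior ℝ σ ∩ intrinsicInterior ℝ τ = ∅)
    (hfine : ∀ w : Fin n → ℤ, toR w ∈ frontier P →
      {x | ∃ c : ℝ, 0 ≤ c ∧ x = c • toR w} ∈ F)
    (hsupp : ⋃₀ F = {x | ∃ c : ℝ, 0 ≤ c ∧ ∃ y ∈ P, x = c • y})
    (u : Fin n → (Fin n → ℤ))
    (hindep : LinearIndependent ℝ (fun i => toR (u i)))
    (hubd : ∀ i, toR (u i) ∈ frontier P)
    (hσ : {x | ∃ a : Fin n → ℝ, (∀ i, 0 ≤ a i) ∧ x = ∑ i, a i • toR (u i)} ∈ F)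
    (hbp1 : ¬ OnCommonFacet P (Set.range fun i => toR (u i)))
    (hbp2 : ∀ j : Fin n, OnCommonFacet P {x | ∃ i, i ≠ j ∧ x = toR (u i)}) :
    False :=
  stmt_11_general V P hP h0 F hfan hfine u hindep hubd hσ hbp1 hbp2
end

section
/- For a fine simplicial fan arising from a 4-dimensional reflexive polytope Δ°, every basepoint cone has dimension exactly 3. In particular, no basepoint cone has dimension 2 (two generators not sharing a facet force an interior lattice point of the cone, contradicting fineness), and no basepoint cone has dimension 4. -/
/-!
Linear independence of the generators gives `k ≤ 4`, and for `k ≤ 1` the generators would share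
a facet. For `k = 2`, every facet normal pairs with `u₁ + u₂` to a sum of two integers `≥ -1`
that are not both `-1`, so `u₁ + u₂ ∈ Δ°`; as `Δ°` is bounded some normal pairs negatively with
it, so `u₁ + u₂` lies on a facet and spans a ray of the fine fan through the relative interior
of `σ`, which contradicts the fan property. For `k = 4`, look at the compact convex set
`Q = σ ∩ Δ°`. An extreme point of `Q` in the interior of `σ` is a vertex of `Δ°`, hence again a
boundary lattice point inside `σ`. Otherwise every extreme point of `Q` has a vanishing
coordinate `xⱼ`, where the facet through the other generators bounds the coordinate sum by `1`;
by Krein–Milman this bound holds on all of `Q`, but a point slightly beyond the barycentre of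
the generators, which lies on no facet, has coordinate sum `> 1`.
-/

open Topology

section Cone

variable {E : Type*} [NormedAddCommGroup E] [NormedSpace ℝ E] {ι : Type*} [Fintype ι]

def coneOf (v : ι → E) : Set E := {x | ∃ a : ι → ℝ, (∀ i, 0 ≤ a i) ∧ x = ∑ i, a i • v i}

def ray (w : E) : Set E := {x | ∃ c : ℝ, 0 ≤ c ∧ x = c • w}

theorem mem_intrinsicInterior_coneOf {v : ι → E} (hv : LinearIndependent ℝ v) {b : ι → ℝ}
    (hb : ∀ i, 0 < b i) : ∑ i, b i • v i ∈ intrinsicInterior ℝ (coneOf v) := by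
  set W := Submodule.span ℝ (Set.range v)
  let e : (ι → ℝ) ≃ᵃ[ℝ] W := (Module.Basis.span hv).equivFun.symm.toAffineEquiv
  have he : ∀ a, (e a : E) = ∑ i, a i • v i := fun a => by
    simp [e, Module.Basis.equivFun_symm_apply, Module.Basis.span_apply]
  have hcone : coneOf v = W.subtypeₗᵢ.toAffineIsometry '' (e '' {a | ∀ i, 0 ≤ a i}) := by
    ext x
    simp only [coneOf, Set.image_image, Set.mem_image, Set.mem_ofPred_eq]
    exact exists_congr fun a => and_congr_right fun _ => by simp [he, eq_comm]
  have hint : b ∈ intrinsicInterior ℝ {a : ι → ℝ | ∀ i, 0 ≤ a i} := by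
    have hopen : IsOpen {a : ι → ℝ | ∀ i, 0 < a i} := by
      rw [Set.ofPred_forall]
      exact isOpen_iInter_of_finite fun i => isOpen_lt continuous_const (continuous_apply i)
    have hsub : {a : ι → ℝ | ∀ i, 0 < a i} ⊆ {a | ∀ i, 0 ≤ a i} := fun a ha i => (ha i).le
    exact interior_subset_intrinsicInterior (interior_maximal hsub hopen hb)
  rw [hcone, AffineIsometry.intrinsicInterior_image, AffineEquiv.intrinsicInterior_image]
  exact ⟨e b, ⟨b, hint, rfl⟩, he b⟩

theorem ray_eq_coneOf (w : E) : ray w = coneOf (fun _ : Unit => w) := by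
  ext x
  constructor
  · rintro ⟨c, hc, rfl⟩
    exact ⟨fun _ => c, fun _ => hc, by simp⟩
  · rintro ⟨a, ha, rfl⟩
    exact ⟨a (), ha (), by simp⟩

theorem convex_coneOf (v : ι → E) : Convex ℝ (coneOf v) := by
  rintro _ ⟨a, ha, rfl⟩ _ ⟨c, hc, rfl⟩ s t hs ht -
  refine ⟨s • a + t • c, fun i => ?_, ?_⟩
  · exact add_nonneg (mul_nonneg hs (ha i)) (mul_nonneg ht (hc i))
  · simp only [Pi.add_apply, Pi.smul_apply, smul_eq_mul, add_smul, mul_smul,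
      Finset.sum_add_distrib, Finset.smul_sum]

theorem card_le_one_of_ray_mem_fan {F : Set (Set E)}
    (hfan : ∀ σ ∈ F, ∀ τ ∈ F, σ ≠ τ → intrinsicInterior ℝ σ ∩ intrinsicInterior ℝ τ = ∅)
    {v : ι → E} (hv : LinearIndependent ℝ v) (hσ : coneOf v ∈ F) {w : E} (hρ : ray w ∈ F)
    {b : ι → ℝ} (hb : ∀ i, 0 < b i) (hw : ∑ i, b i • v i = w) : Fintype.card ι ≤ 1 := by
  classical
  by_contra! hcard
  obtain ⟨i, j, hij⟩ := Fintype.exists_pair_of_one_lt_card hcard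
  have hw0 : w ≠ 0 := by
    rintro rfl
    exact (hb i).ne' (Fintype.linearIndependent_iff.1 hv b hw i)
  have hwσ : w ∈ intrinsicInterior ℝ (coneOf v) := hw ▸ mem_intrinsicInterior_coneOf hv hb
  have hwρ : w ∈ intrinsicInterior ℝ (ray w) := by
    simpa [ray_eq_coneOf] using
      mem_intrinsicInterior_coneOf (linearIndependent_unique_iff.2 hw0) (fun _ : Unit => one_pos)
  have hσρ : coneOf v = ray w := by
    by_contra hne
    exact (hfan _ hσ _ hρ hne).subset ⟨hwσ, hwρ⟩
  have hmem : ∀ k, v k ∈ ray w := fun k => hσρ ▸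
    ⟨Pi.single k 1, fun l => by by_cases h : l = k <;> simp [h], by simp⟩
  obtain ⟨c, -, hc⟩ := hmem i
  obtain ⟨d, -, hd⟩ := hmem j
  have hpair : LinearIndependent ℝ ![v i, v j] := by
    convert hv.comp ![i, j] (by intro k l; fin_cases k <;> fin_cases l <;> simp [hij, hij.symm])
    ext k; fin_cases k <;> rfl
  have hc0 : c = 0 :=
    (hpair.eq_zero_of_pair' (s := d) (t := c) (by rw [hc, hd, smul_smul, smul_smul, mul_comm])).2
  exact hv.ne_zero i (by rw [hc, hc0, zero_smul])

end Cone

section Polar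

variable {n : ℕ} {κ : Type*} (M : Finset κ) (ℓ : κ → Fin n → ℝ)

def polarPolyhedron : Set (Fin n → ℝ) := {x | ∀ m ∈ M, -1 ≤ ℓ m ⬝ᵥ x}

variable {M ℓ}

theorem convex_polarPolyhedron : Convex ℝ (polarPolyhedron M ℓ) := by
  intro x hx y hy a b ha hb hab m hm
  rw [dotProduct_add, dotProduct_smul, dotProduct_smul, smul_eq_mul, smul_eq_mul]
  nlinarith [hx m hm, hy m hm]

theorem isClosed_polarPolyhedron : IsClosed (polarPolyhedron M ℓ) := by
  have : polarPolyhedron M ℓ = ⋂ m ∈ M, {x | -1 ≤ ℓ m ⬝ᵥ x} := by ext; simp [polarPolyhedron]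
  rw [this]
  exact isClosed_biInter fun m _ => isClosed_le continuous_const (by fun_prop)

theorem setOf_lt_subset_interior_polarPolyhedron :
    {x | ∀ m ∈ M, -1 < ℓ m ⬝ᵥ x} ⊆ interior (polarPolyhedron M ℓ) := by
  refine interior_maximal (fun x hx m hm => (hx m hm).le) ?_
  have : {x | ∀ m ∈ M, -1 < ℓ m ⬝ᵥ x} = ⋂ m ∈ M, {x | -1 < ℓ m ⬝ᵥ x} := by ext; simp
  rw [this]
  exact isOpen_biInter_finset fun m _ => isOpen_lt continuous_const (by fun_prop)

theorem exists_dotProduct_eq_neg_one_of_mem_frontier {x : Fin n → ℝ}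
    (hx : x ∈ frontier (polarPolyhedron M ℓ)) : ∃ m ∈ M, ℓ m ⬝ᵥ x = -1 := by
  have hxP : x ∈ polarPolyhedron M ℓ := isClosed_polarPolyhedron.frontier_subset hx
  obtain ⟨m, hm, hle⟩ : ∃ m ∈ M, ℓ m ⬝ᵥ x ≤ -1 := by
    by_contra! h
    exact hx.2 (setOf_lt_subset_interior_polarPolyhedron h)
  exact ⟨m, hm, le_antisymm hle (hxP m hm)⟩

theorem mem_frontier_of_dotProduct_eq_neg_one {x : Fin n → ℝ} (hx : x ∈ polarPolyhedron M ℓ)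
    {m : κ} (hm : m ∈ M) (hxm : ℓ m ⬝ᵥ x = -1) : x ∈ frontier (polarPolyhedron M ℓ) := by
  refine ⟨subset_closure hx, fun hint => ?_⟩
  have hℓ : 0 < ℓ m ⬝ᵥ ℓ m := by
    have hne : ℓ m ≠ 0 := by
      rintro h
      rw [h, zero_dotProduct] at hxm
      norm_num at hxm
    simpa using Matrix.dotProduct_star_self_pos_iff.2 hne
  have hev : ∀ᶠ t : ℝ in 𝓝 0, x - t • ℓ m ∈ polarPolyhedron M ℓ :=
    (by fun_prop : Continuous fun t : ℝ => x - t • ℓ m).continuousAt.eventually_mem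
      (by simpa using mem_interior_iff_mem_nhds.1 hint)
  obtain ⟨t, ht, ht0⟩ := ((hev.filter_mono nhdsWithin_le_nhds).and
    (self_mem_nhdsWithin : Set.Ioi (0 : ℝ) ∈ 𝓝[>] 0)).exists
  have := ht m hm
  rw [dotProduct_sub, dotProduct_smul, hxm, smul_eq_mul] at this
  nlinarith [mul_pos (Set.mem_Ioi.1 ht0) hℓ]

theorem exists_dotProduct_neg_of_isCompact (hP : IsCompact (polarPolyhedron M ℓ))
    {x : Fin n → ℝ} (hx : x ≠ 0) : ∃ m ∈ M, ℓ m ⬝ᵥ x < 0 := by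
  by_contra! h
  obtain ⟨C, hC⟩ := hP.isBounded.exists_norm_le
  have hxn : 0 < ‖x‖ := norm_pos_iff.2 hx
  have hray : ((|C| + 1) / ‖x‖) • x ∈ polarPolyhedron M ℓ := fun m hm => by
    rw [dotProduct_smul, smul_eq_mul]
    nlinarith [h m hm, div_pos (by positivity : 0 < |C| + 1) hxn]
  have := hC _ hray
  rw [norm_smul, Real.norm_of_nonneg (by positivity), div_mul_cancel₀ _ hxn.ne'] at this
  linarith [le_abs_self C]

end Polar

theorem toR_add {n : ℕ} (a b : Fin n → ℤ) : toR (a + b) = toR a + toR b := by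
  ext; simp [toR]

theorem toR_dotProduct_toR {n : ℕ} (a b : Fin n → ℤ) : toR a ⬝ᵥ toR b = ((a ⬝ᵥ b : ℤ) : ℝ) := by
  simp [toR, dotProduct]

theorem toR_add_mem_frontier {n : ℕ} {M : Finset (Fin n → ℤ)}
    (hP : IsCompact (polarPolyhedron M toR)) {a b : Fin n → ℤ}
    (ha : toR a ∈ polarPolyhedron M toR) (hb : toR b ∈ polarPolyhedron M toR)
    (hab : toR (a + b) ≠ 0) (hM : ¬∃ m ∈ M, toR m ⬝ᵥ toR a = -1 ∧ toR m ⬝ᵥ toR b = -1) :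
    toR (a + b) ∈ frontier (polarPolyhedron M toR) := by
  have hdot : ∀ m, toR m ⬝ᵥ toR (a + b) = ((m ⬝ᵥ a + m ⬝ᵥ b : ℤ) : ℝ) := fun m => by
    rw [toR_add, dotProduct_add, toR_dotProduct_toR, toR_dotProduct_toR, Int.cast_add]
  -- two integers `≥ -1` that are not both `-1` have sum `≥ -1`
  have hge : ∀ m ∈ M, -1 ≤ m ⬝ᵥ a + m ⬝ᵥ b := fun m hm => by
    have h1 := ha m hm
    have h2 := hb m hm
    have h3 : ¬(toR m ⬝ᵥ toR a = -1 ∧ toR m ⬝ᵥ toR b = -1) := fun h => hM ⟨m, hm, h⟩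
    simp only [toR_dotProduct_toR] at h1 h2 h3
    have : -1 ≤ m ⬝ᵥ a := by exact_mod_cast h1
    have : -1 ≤ m ⬝ᵥ b := by exact_mod_cast h2
    have : ¬(m ⬝ᵥ a = -1 ∧ m ⬝ᵥ b = -1) := by exact_mod_cast h3
    omega
  have habP : toR (a + b) ∈ polarPolyhedron M toR := fun m hm => by
    rw [hdot]; exact_mod_cast hge m hm
  obtain ⟨m, hm, hneg⟩ := exists_dotProduct_neg_of_isCompact hP hab
  refine mem_frontier_of_dotProduct_eq_neg_one habP hm ?_
  rw [hdot] at hneg ⊢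
  have := hge m hm
  have : m ⬝ᵥ a + m ⬝ᵥ b < 0 := by exact_mod_cast hneg
  exact_mod_cast (show m ⬝ᵥ a + m ⬝ᵥ b = -1 by omega)

section Basis

variable {E ι : Type*} [NormedAddCommGroup E] [NormedSpace ℝ E] [Fintype ι]
  (b : Module.Basis ι ℝ E)

theorem coneOf_basis : coneOf ⇑b = {x | ∀ i, 0 ≤ b.equivFun x i} := by
  ext x
  constructor
  · rintro ⟨a, ha, rfl⟩
    rw [← b.equivFun_symm_apply]
    exact fun i => by rw [LinearEquiv.apply_symm_apply]; exact ha i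
  · exact fun hx => ⟨_, hx, (b.sum_equivFun x).symm⟩

theorem continuous_basis_equivFun : Continuous b.equivFun :=
  have := Module.Finite.of_basis b
  b.equivFun.toLinearMap.continuous_of_finiteDimensional

theorem isClosed_coneOf_basis : IsClosed (coneOf ⇑b) := by
  rw [coneOf_basis, Set.ofPred_forall]
  exact isClosed_iInter fun i => isClosed_le continuous_const
    ((continuous_apply i).comp (continuous_basis_equivFun b))

theorem mem_interior_coneOf_basis {x : E} (hx : ∀ i, 0 < b.equivFun x i) :
    x ∈ interior (coneOf ⇑b) := by
  refine interior_maximal (t := {y | ∀ i, 0 < b.equivFun y i}) (fun y hy => ?_) ?_ hx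
  · rw [coneOf_basis]; exact fun i => (hy i).le
  · rw [Set.ofPred_forall]
    exact isOpen_iInter_of_finite fun i => isOpen_lt continuous_const
      ((continuous_apply i).comp (continuous_basis_equivFun b))

end Basis

theorem mem_extremePoints_of_mem_interior {E : Type*} [AddCommGroup E] [Module ℝ E]
    [TopologicalSpace E] [IsTopologicalAddGroup E] [ContinuousSMul ℝ E] {C P : Set E}
    (hP : Convex ℝ P) {q : E} (hq : q ∈ (C ∩ P).extremePoints ℝ) (hqC : q ∈ interior C) :
    q ∈ P.extremePoints ℝ := by
  refine ⟨hq.1.2, fun x hx y hy hseg => ?_⟩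
  -- shrink the segment `[x, y]` towards `q` until it lies in `C`
  have hnear : ∀ z, ∀ᶠ t in 𝓝[>] (0 : ℝ), AffineMap.homothety q t z ∈ C := fun z => by
    have hcont : Continuous fun t : ℝ => AffineMap.homothety q t z := by
      simp only [AffineMap.homothety_apply, vsub_eq_sub, vadd_eq_add]; fun_prop
    refine (hcont.tendsto' 0 q (by simp)).eventually (mem_interior_iff_mem_nhds.1 hqC)
      |>.filter_mono nhdsWithin_le_nhds
  obtain ⟨t, ⟨hxC, hyC⟩, ht⟩ :=
    ((hnear x).and (hnear y)).and (Ioo_mem_nhdsGT (zero_lt_one' ℝ)) |>.exists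
  have hmemP : ∀ z ∈ P, AffineMap.homothety q t z ∈ P := fun z hz => by
    rw [AffineMap.homothety_eq_lineMap]
    exact hP.lineMap_mem hq.1.2 hz ⟨ht.1.le, ht.2.le⟩
  have hseg' : q ∈ openSegment ℝ (AffineMap.homothety q t x) (AffineMap.homothety q t y) := by
    rw [← image_openSegment]
    exact ⟨q, hseg, AffineMap.homothety_apply_same q t⟩
  have := hq.2 ⟨hxC, hmemP x hx⟩ ⟨hyC, hmemP y hy⟩ hseg'
  rw [AffineMap.homothety_eq_lineMap, AffineMap.lineMap_eq_left_iff] at this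
  exact this.resolve_right ht.1.ne' |>.symm

theorem subset_of_extremePoints_subset {E : Type*} [AddCommGroup E] [Module ℝ E]
    [TopologicalSpace E] [T2Space E] [IsTopologicalAddGroup E] [ContinuousSMul ℝ E]
    [LocallyConvexSpace ℝ E] {K S : Set E} (hK : IsCompact K) (hKc : Convex ℝ K)
    (hS : IsClosed S) (hSc : Convex ℝ S) (h : K.extremePoints ℝ ⊆ S) : K ⊆ S := by
  rw [← closure_convexHull_extremePoints hK hKc]
  exact closure_minimal (convexHull_min h hSc) hS

section PolarBasis

variable {n : ℕ} {ι κ : Type*} [Fintype ι] {M : Finset κ} {ℓ : κ → Fin n → ℝ}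
  (b : Module.Basis ι ℝ (Fin n → ℝ))

theorem sum_equivFun_le_one {x : Fin n → ℝ} (hx : x ∈ polarPolyhedron M ℓ) {j : ι}
    (hxj : b.equivFun x j = 0) {m : κ} (hm : m ∈ M) (hmb : ∀ i, i ≠ j → ℓ m ⬝ᵥ b i = -1) :
    ∑ i, b.equivFun x i ≤ 1 := by
  have hdot : ℓ m ⬝ᵥ x = -∑ i, b.equivFun x i := by
    conv_lhs => rw [← b.sum_equivFun x]
    rw [dotProduct_sum, ← Finset.sum_neg_distrib]
    refine Finset.sum_congr rfl fun i _ => ?_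
    rw [dotProduct_smul, smul_eq_mul]
    by_cases hij : i = j
    · rw [hij, hxj, zero_mul, neg_zero]
    · rw [hmb i hij, mul_neg_one]
  linarith [hx m hm]

theorem exists_one_lt_sum_equivFun [Nonempty ι] (hb : ∀ i, b i ∈ polarPolyhedron M ℓ)
    (hM : ¬∃ m ∈ M, ∀ i, ℓ m ⬝ᵥ b i = -1) :
    ∃ x ∈ coneOf ⇑b ∩ polarPolyhedron M ℓ, 1 < ∑ i, b.equivFun x i := by
  set c : ℝ := (Fintype.card ι : ℝ)
  have hc : 0 < c := Nat.cast_pos.2 Fintype.card_pos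
  set z := ∑ i, c⁻¹ • b i
  have hz : z ∈ interior (polarPolyhedron M ℓ) :=
    setOf_lt_subset_interior_polarPolyhedron fun m hm => by
      obtain ⟨i₀, hi₀⟩ : ∃ i, ℓ m ⬝ᵥ b i ≠ -1 := by
        by_contra! h
        exact hM ⟨m, hm, h⟩
      have hsum : -c < ∑ i, ℓ m ⬝ᵥ b i :=
        calc -c = ∑ _ : ι, (-1 : ℝ) := by simp [c]
          _ < ∑ i, ℓ m ⬝ᵥ b i := Finset.sum_lt_sum (fun i _ => hb i m hm)
            ⟨i₀, Finset.mem_univ _, lt_of_le_of_ne (hb i₀ m hm) hi₀.symm⟩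
      simp only [z, dotProduct_sum, dotProduct_smul, smul_eq_mul, ← Finset.mul_sum]
      rw [← div_eq_inv_mul, lt_div_iff₀ hc]
      linarith
  have hev : ∀ᶠ t in 𝓝 (1 : ℝ), t • z ∈ polarPolyhedron M ℓ :=
    (by fun_prop : Continuous fun t : ℝ => t • z).continuousAt.eventually_mem
      (by simpa using mem_interior_iff_mem_nhds.1 hz)
  obtain ⟨t, ht, ht1⟩ := ((hev.filter_mono nhdsWithin_le_nhds).and
    (self_mem_nhdsWithin : Set.Ioi (1 : ℝ) ∈ 𝓝[>] 1)).exists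
  have ht0 : 0 < t := zero_lt_one.trans ht1
  have htz : t • z = ∑ i, (fun _ => t * c⁻¹) i • b i := by
    simp only [z, Finset.smul_sum, smul_smul]
  refine ⟨t • z, ⟨⟨_, fun _ => by positivity, htz⟩, ht⟩, ?_⟩
  rw [htz, ← b.equivFun_symm_apply, LinearEquiv.apply_symm_apply, Finset.sum_const,
    Finset.card_univ, nsmul_eq_mul, mul_left_comm, mul_inv_cancel₀ hc.ne', mul_one]
  exact ht1

end PolarBasis

theorem exists_mem_extremePoints_eq_sum_pos_smul {n : ℕ} {ι κ : Type*} [Fintype ι] [Nonempty ι]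
    {M : Finset κ} {ℓ : κ → Fin n → ℝ} (hP : IsCompact (polarPolyhedron M ℓ))
    {v : ι → Fin n → ℝ} (hv : LinearIndependent ℝ v) (hcard : Fintype.card ι = n)
    (hvP : ∀ i, v i ∈ polarPolyhedron M ℓ) (hM : ¬∃ m ∈ M, ∀ i, ℓ m ⬝ᵥ v i = -1)
    (hM' : ∀ j, ∃ m ∈ M, ∀ i, i ≠ j → ℓ m ⬝ᵥ v i = -1) :
    ∃ q ∈ (polarPolyhedron M ℓ).extremePoints ℝ,
      ∃ a : ι → ℝ, (∀ i, 0 < a i) ∧ ∑ i, a i • v i = q := by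
  obtain ⟨b, rfl⟩ : ∃ b : Module.Basis ι ℝ (Fin n → ℝ), ⇑b = v :=
    ⟨_, coe_basisOfLinearIndependentOfCardEqFinrank hv (by simpa using hcard)⟩
  set P := polarPolyhedron M ℓ
  suffices ∃ q ∈ (coneOf ⇑b ∩ P).extremePoints ℝ, ∀ i, 0 < b.equivFun q i by
    obtain ⟨q, hq, hpos⟩ := this
    exact ⟨q, mem_extremePoints_of_mem_interior convex_polarPolyhedron hq
      (mem_interior_coneOf_basis b hpos), _, hpos, b.sum_equivFun q⟩
  by_contra! h
  have hext : (coneOf ⇑b ∩ P).extremePoints ℝ ⊆ {x | ∑ i, b.equivFun x i ≤ 1} := fun q hq => by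
    obtain ⟨j, hj⟩ := h q hq
    have hqj : b.equivFun q j = 0 := le_antisymm hj ((coneOf_basis b ▸ hq.1.1 : _) j)
    obtain ⟨m, hm, hmb⟩ := hM' j
    exact sum_equivFun_le_one b hq.1.2 hqj hm hmb
  have hsum : IsLinearMap ℝ fun x => ∑ i, b.equivFun x i :=
    ⟨fun x y => by simp [Finset.sum_add_distrib], fun c x => by simp [Finset.mul_sum]⟩
  have hsub := subset_of_extremePoints_subset (hP.inter_left (isClosed_coneOf_basis b))
    ((convex_coneOf _).inter convex_polarPolyhedron)
    (isClosed_le (continuous_finsetSum _ fun i _ =>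
      (continuous_apply i).comp (continuous_basis_equivFun b)) continuous_const)
    (convex_halfSpace_le hsum 1) hext
  obtain ⟨x, hx, hx1⟩ := exists_one_lt_sum_equivFun b hvP hM
  exact (hsub hx).not_gt hx1

theorem stmt_12_general (V M : Finset (Fin 4 → ℤ)) (P : Set (Fin 4 → ℝ))
    (hPV : P = convexHull ℝ (toR '' ↑V))
    (hPM : P = {x | ∀ m ∈ M, (-1 : ℝ) ≤ ∑ i, (m i : ℝ) * x i})
    (F : Set (Set (Fin 4 → ℝ)))
    (hfan : ∀ σ ∈ F, ∀ τ ∈ F, σ ≠ τ →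
      intrinsicInterior ℝ σ ∩ intrinsicInterior ℝ τ = ∅)
    (hfine : ∀ w : Fin 4 → ℤ, toR w ∈ frontier P →
      {x | ∃ c : ℝ, 0 ≤ c ∧ x = c • toR w} ∈ F)
    (k : ℕ) (u : Fin k → (Fin 4 → ℤ))
    (hindep : LinearIndependent ℝ (fun i => toR (u i)))
    (hubd : ∀ i, toR (u i) ∈ frontier P)
    (hσ : {x | ∃ a : Fin k → ℝ, (∀ i, 0 ≤ a i) ∧ x = ∑ i, a i • toR (u i)} ∈ F)
    (hbp1 : ¬ ∃ m ∈ M, ∀ i, (∑ l, (m l : ℝ) * (u i l : ℝ)) = -1)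
    (hbp2 : ∀ j : Fin k, ∃ m ∈ M, ∀ i, i ≠ j → (∑ l, (m l : ℝ) * (u i l : ℝ)) = -1) :
    k = 3 := by
  obtain rfl : P = polarPolyhedron M toR := hPM
  have hPc : IsCompact (polarPolyhedron M toR) :=
    hPV ▸ (V.finite_toSet.image toR).isCompact_convexHull ℝ
  have huP : ∀ i, toR (u i) ∈ polarPolyhedron M toR :=
    fun i => isClosed_polarPolyhedron.frontier_subset (hubd i)
  have hk : k ≤ 4 := by simpa using hindep.fintype_card_le_finrank
  interval_cases k
  · obtain ⟨m, hm, -⟩ := exists_dotProduct_neg_of_isCompact hPc (one_ne_zero (α := Fin 4 → ℝ))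
    exact absurd ⟨m, hm, fun i => i.elim0⟩ hbp1
  · obtain ⟨m, hm, hm1⟩ := exists_dotProduct_eq_neg_one_of_mem_frontier (hubd 0)
    exact absurd ⟨m, hm, Fin.forall_fin_one.2 hm1⟩ hbp1
  · have hsum : ∑ i, (fun _ => (1 : ℝ)) i • toR (u i) = toR (u 0 + u 1) := by
      simp [toR_add]
    have hfr := toR_add_mem_frontier hPc (huP 0) (huP 1)
      (fun h => one_ne_zero (Fintype.linearIndependent_iff.1 hindep _ (hsum.trans h) 0))
      (fun ⟨m, hm, h0, h1⟩ => hbp1 ⟨m, hm, Fin.forall_fin_two.2 ⟨h0, h1⟩⟩)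
    exact absurd (card_le_one_of_ray_mem_fan hfan hindep hσ (hfine _ hfr) (fun _ => one_pos) hsum)
      (by simp)
  · rfl
  · obtain ⟨q, hq, a, ha, hqa⟩ :=
      exists_mem_extremePoints_eq_sum_pos_smul hPc hindep (by simp) huP hbp1 hbp2
    obtain ⟨w, -, rfl⟩ := extremePoints_convexHull_subset (hPV ▸ hq)
    have hfr : toR w ∈ frontier (polarPolyhedron M toR) :=
      ⟨subset_closure hq.1, fun h => (disjoint_interior_extremePoints _).ne_of_mem h hq rfl⟩
    exact absurd (card_le_one_of_ray_mem_fan hfan hindep hσ (hfine w hfr) ha hqa) (by simp)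

/-- For a fine simplicial fan `F` arising from a 4-dimensional
reflexive polytope `Δ° = P` (a lattice polytope, equal to the intersection of the
halfspaces `⟨m, ·⟩ ≥ -1` over its finite set `M` of integral facet normals, with `0`
in its interior), every basepoint cone has dimension exactly `3`.  Here a cone of `F`
with linearly independent generators `u₁, …, u_k` (boundary lattice points of `Δ°`) is
a *basepoint cone* when its generators are contained in no facet of `Δ°` while, for
each `j`, the generators `{uᵢ : i ≠ j}` of each maximal proper face are contained in
some facet.  In particular no basepoint cone has dimension `2` or dimension `4`. -/
theorem stmt_12 (V M : Finset (Fin 4 → ℤ)) (P : Set (Fin 4 → ℝ))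
    (hPV : P = convexHull ℝ (toR '' ↑V))
    (hPM : P = {x | ∀ m ∈ M, (-1 : ℝ) ≤ ∑ i, (m i : ℝ) * x i})
    (h0 : (0 : Fin 4 → ℝ) ∈ interior P)
    (F : Set (Set (Fin 4 → ℝ)))
    (hfan : ∀ σ ∈ F, ∀ τ ∈ F, σ ≠ τ →
      intrinsicInterior ℝ σ ∩ intrinsicInterior ℝ τ = ∅)
    (hfine : ∀ w : Fin 4 → ℤ, toR w ∈ frontier P →
      {x | ∃ c : ℝ, 0 ≤ c ∧ x = c • toR w} ∈ F)
    (hsupp : ⋃₀ F = {x | ∃ c : ℝ, 0 ≤ c ∧ ∃ y ∈ P, x = c • y})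
    (k : ℕ) (u : Fin k → (Fin 4 → ℤ))
    (hindep : LinearIndependent ℝ (fun i => toR (u i)))
    (hubd : ∀ i, toR (u i) ∈ frontier P)
    (hσ : {x | ∃ a : Fin k → ℝ, (∀ i, 0 ≤ a i) ∧ x = ∑ i, a i • toR (u i)} ∈ F)
    (hbp1 : ¬ ∃ m ∈ M, ∀ i, (∑ l, (m l : ℝ) * (u i l : ℝ)) = -1)
    (hbp2 : ∀ j : Fin k, ∃ m ∈ M, ∀ i, i ≠ j → (∑ l, (m l : ℝ) * (u i l : ℝ)) = -1) :
    k = 3 :=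
  stmt_12_general V M P hPV hPM F hfan hfine k u hindep hubd hσ hbp1 hbp2
end

section
/- Let A be a point configuration containing the origin with label 0, and let ω be a height vector with ω₀ ≤ ωⱼ for all j such that the lifted lower faces define a regular triangulation T(A, ω). Then lifting the vector configuration A_VC = A \ {0} by the heights ωⱼ - ω₀ yields the regular triangulation of A_VC whose cells are exactly {σ : σ ∪ {0} ∈ T(A, ω)}. -/
/-!
The origin has label `0`, so an affine functional `x ↦ ⟨α, x⟩ + c` that agrees with the heights
at label `0` has constant term `c = ω₀`. Hence the affine lower-face witnesses of cells containing
`0` are exactly the linear witnesses `ψ` for the shifted heights `ωⱼ - ω₀`, shifted back by `ω₀`.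
-/

section LowerFace

variable {ι κ 𝕜 : Type*} [DecidableEq ι] [Fintype κ] [Field 𝕜] [LinearOrder 𝕜]
  [IsStrictOrderedRing 𝕜]

theorem exists_linear_lower_face_iff_exists_affine_lower_face_insert
    (q : ι → κ → 𝕜) (ω : ι → 𝕜) {o : ι} (hq : q o = 0) (σ : Finset ι) :
    (∃ ψ : κ → 𝕜, (∀ j ∈ σ, ψ ⬝ᵥ q j = ω j - ω o) ∧
        (∀ j, j ∉ σ → j ≠ o → ψ ⬝ᵥ q j < ω j - ω o)) ↔
      ∃ α : κ → 𝕜, ∃ c : 𝕜, (∀ j ∈ insert o σ, α ⬝ᵥ q j + c = ω j) ∧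
        ∀ j ∉ insert o σ, α ⬝ᵥ q j + c < ω j := by
  constructor
  · rintro ⟨ψ, h_eq, h_lt⟩
    refine ⟨ψ, ω o, fun j hj ↦ ?_, fun j hj ↦ ?_⟩
    · rcases Finset.mem_insert.1 hj with rfl | hjσ
      · simp [hq]
      · linarith [h_eq j hjσ]
    · rw [Finset.mem_insert, not_or] at hj
      linarith [h_lt j hj.2 hj.1]
  · rintro ⟨α, c, h_eq, h_lt⟩
    have hc : c = ω o := by simpa [hq] using h_eq o (Finset.mem_insert_self o σ)
    subst hc
    refine ⟨α, fun j hj ↦ ?_, fun j hjσ hjo ↦ ?_⟩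
    · linarith [h_eq j (Finset.mem_insert_of_mem hj)]
    · linarith [h_lt j (by simp [hjo, hjσ])]

end LowerFace

theorem stmt_13_general {m n : ℕ} (q : Fin (n + 1) → (Fin m → ℝ)) (hq0 : q 0 = 0)
    (ω : Fin (n + 1) → ℝ)
    (σ : Finset (Fin (n + 1))) :
    (∃ ψ : Fin m → ℝ,
        (∀ j ∈ σ, (∑ i, ψ i * q j i) = ω j - ω 0) ∧
        (∀ j, j ∉ σ → j ≠ 0 → (∑ i, ψ i * q j i) < ω j - ω 0))
      ↔ (∃ α : Fin m → ℝ, ∃ c : ℝ,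
        (∀ j ∈ insert 0 σ, (∑ i, α i * q j i) + c = ω j) ∧
        (∀ j ∉ insert 0 σ, (∑ i, α i * q j i) + c < ω j)) :=
  exists_linear_lower_face_iff_exists_affine_lower_face_insert q ω hq0 σ

/-- Let `A` be a point configuration `q : Fin (n+1) → ℝᵐ` containing
the origin with label `0` (`q 0 = 0`), and let `ω` be a height vector with
`ω 0 ≤ ω j` for all `j`.  A subset `σ` of labels is a cell of the regular subdivision
`T(A, ω)` exactly when some affine functional `x ↦ ⟨α, x⟩ + c` agrees with the heights
on `σ` and lies strictly below them off `σ` (the lower-face criterion); similarly a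
cell of the regular subdivision of the vector configuration `A_VC = A \ {0}` with
heights `ωⱼ - ω₀` is witnessed by a linear functional `ψ`.  Then lifting `A_VC` by
`ωⱼ - ω₀` yields exactly the cells `{σ : σ ∪ {0} ∈ T(A, ω)}`: for every `σ` with
`0 ∉ σ`, `σ` is a cell of `T(A_VC, ω - ω₀)` iff `σ ∪ {0}` is a cell of `T(A, ω)`. -/
theorem stmt_13 {m n : ℕ} (q : Fin (n + 1) → (Fin m → ℝ)) (hq0 : q 0 = 0)
    (ω : Fin (n + 1) → ℝ) (hω : ∀ j, ω 0 ≤ ω j)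
    (σ : Finset (Fin (n + 1))) (hσ : 0 ∉ σ) :
    (∃ ψ : Fin m → ℝ,
        (∀ j ∈ σ, (∑ i, ψ i * q j i) = ω j - ω 0) ∧
        (∀ j, j ∉ σ → j ≠ 0 → (∑ i, ψ i * q j i) < ω j - ω 0))
      ↔ (∃ α : Fin m → ℝ, ∃ c : ℝ,
        (∀ j ∈ insert 0 σ, (∑ i, α i * q j i) + c = ω j) ∧
        (∀ j ∉ insert 0 σ, (∑ i, α i * q j i) + c < ω j)) :=
  stmt_13_general q hq0 ω σ
end

section
/- Let A be a minimally dependent vector configuration with dependency λ ≠ 0, and partition labels into J₊ = {j : λⱼ > 0} and J₋ = {j : λⱼ < 0}. If both J₊ and J₋ are nonempty, then the union over j ∈ J₊ of cone(A \ {aⱼ}) equals cone(A). -/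
/-- Let `a₁, …, aₙ ⊂ ℝᵐ` be a minimally dependent vector
configuration (every proper subconfiguration is linearly independent) with dependency
`λ ≠ 0`, `Σᵢ λᵢ aᵢ = 0`, and suppose both `J₊ = {j : λⱼ > 0}` and `J₋ = {j : λⱼ < 0}`
are nonempty.  Then the union over `j ∈ J₊` of the cones `cone(A \ {aⱼ})` (nonnegative
combinations with `j`-th coefficient zero) equals `cone(A)`. -/
theorem stmt_16 {m n : ℕ} (a : Fin n → (Fin m → ℝ))
    (hmin : ∀ j : Fin n,
      LinearIndependent ℝ (fun k : {k : Fin n // k ≠ j} => a k.1))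
    (lam : Fin n → ℝ) (hlam : lam ≠ 0) (hdep : ∑ i, lam i • a i = 0)
    (hpos : ∃ i, 0 < lam i) (hneg : ∃ i, lam i < 0) :
    {x | ∃ j, 0 < lam j ∧
        ∃ c : Fin n → ℝ, (∀ i, 0 ≤ c i) ∧ c j = 0 ∧ x = ∑ i, c i • a i}
      = {x | ∃ c : Fin n → ℝ, (∀ i, 0 ≤ c i) ∧ x = ∑ i, c i • a i} := by
  ext x
  simp only [Set.mem_setOf_eq]
  constructor
  · rintro ⟨j, _, c, hc, _, rfl⟩
    exact ⟨c, hc, rfl⟩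
  · rintro ⟨c, hc, rfl⟩
    obtain ⟨j0, hj0⟩ := hpos
    have hS : (Finset.univ.filter (fun j => 0 < lam j)).Nonempty :=
      ⟨j0, by simp [hj0]⟩
    obtain ⟨j, hjS, hjmin⟩ :=
      Finset.exists_min_image _ (fun j => c j / lam j) hS
    simp only [Finset.mem_filter, Finset.mem_univ, true_and] at hjS hjmin
    set t := c j / lam j with ht
    have ht0 : 0 ≤ t := div_nonneg (hc j) hjS.le
    refine ⟨j, hjS, fun i => c i - t * lam i, ?_, ?_, ?_⟩
    · intro i
      show 0 ≤ c i - t * lam i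
      rcases lt_or_ge 0 (lam i) with hi | hi
      · have h := (le_div_iff₀ hi).mp (hjmin i hi)
        linarith
      · nlinarith [hc i, mul_nonneg ht0 (neg_nonneg.mpr hi)]
    · show c j - t * lam j = 0
      rw [ht, div_mul_cancel₀ _ hjS.ne', sub_self]
    · have hsum : ∑ i, (c i - t * lam i) • a i
          = (∑ i, c i • a i) - t • ∑ i, lam i • a i := by
        rw [Finset.smul_sum, ← Finset.sum_sub_distrib]
        refine Finset.sum_congr rfl fun i _ => ?_
        rw [sub_smul, smul_smul]
      rw [hsum, hdep, smul_zero, sub_zero]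
end
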